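/- arXiv:2209.13862 — 2 statements merged into one kernel-verified Lean document; each statement's English description precedes it below -/
import Mathlib

section
/- Let P_{XY} be a joint pmf on finite alphabets 𝒳×𝒴 with P_X(x)>0 for every x∈𝒳. Let g:[0,1]→[0,∞) satisfy: g(0)=0, g is continuous at 0, and 0 < sup_{p∈[0,1]} g(p) < ∞. Then the opportunistic maximal g-leakage satisfies log Σ_{y:P_Y(y)>0} P_Y(y) · ( sup over finite alphabets 𝒰 and channels P_{U|X} of G_g(P_{U|Y=y}) / G_g(P_U) ) = log Σ_{y:P_Y(y)>0} max_{x∈𝒳} P_{Y|X}(y|x), i.e., it equals the Sibson mutual information of order ∞, I_∞^S(X;Y). Here P_{U|Y=y}(u)=Σ_x P_{X|Y}(x|y)P_{U|X}(u|x) and P_U(u)=Σ_x P_X(x)P_{U|X}(u|x). -/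
/-!
Fix `y` and write `Q = P_{X|Y=y}`. With `c = max_x Q(x) / P_X(x)` we have `Q ≤ c • P_X`, hence the
same inequality between the output laws of any channel; as `G_g` is monotone and positively
homogeneous, every ratio is at most `c`. Conversely, let `x₀` attain `c`, and use the channel that
sends `x₀` to a dedicated output and spreads every other input uniformly over `n` further outputs.
Guessing `t` with `g(t) ≈ sup g` on the dedicated output gives `G_g(P_{U|Y=y}) ≥ Q(x₀) g(t)`. On the
other side, continuity of `g` at `0` with `g(0) = 0` yields a bound `g(p) ≤ η + L p`, so the spread
outputs contribute at most `η + L / n` to `G_g(P_U) ≤ P_X(x₀) sup g + η + L / n`. Hence the ratios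
approach `Q(x₀) / P_X(x₀) = c`, and `P_Y(y) Q(x) / P_X(x) = P_{Y|X}(y|x)`.
-/

open Finset

/-- A probability mass function on a finite type. -/
def IsPMF {α : Type*} [Fintype α] (p : α → ℝ) : Prop :=
  (∀ a, 0 ≤ p a) ∧ ∑ a, p a = 1

/-- A channel (row-stochastic kernel). -/
def IsChannel {X U : Type*} [Fintype U] (K : X → U → ℝ) : Prop :=
  ∀ x, IsPMF (K x)

/-- The pmf induced on `U` by a pmf `P` on `X` and a channel `K`. -/
noncomputable def push {X U : Type*} [Fintype X] (P : X → ℝ) (K : X → U → ℝ) : U → ℝ :=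
  fun u => ∑ x, P x * K x u

/-- The maximal expected gain `G_g(R) = sup_{P̂} ∑_u R(u) g(P̂(u))`. -/
noncomputable def maxGain {U : Type*} [Fintype U] (g : ℝ → ℝ) (R : U → ℝ) : ℝ :=
  sSup {v : ℝ | ∃ Ph : U → ℝ, IsPMF Ph ∧ v = ∑ u, R u * g (Ph u)}

section Gain

variable {U : Type*} [Fintype U] {g : ℝ → ℝ} {M : ℝ}

lemma IsPMF.le_one {p : U → ℝ} (hp : IsPMF p) (u : U) : p u ≤ 1 :=
  hp.2 ▸ single_le_sum (fun a _ => hp.1 a) (mem_univ u)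

lemma IsPMF.mem_Icc {p : U → ℝ} (hp : IsPMF p) (u : U) : p u ∈ Set.Icc (0 : ℝ) 1 :=
  ⟨hp.1 u, hp.le_one u⟩

lemma le_maxGain (hgM : ∀ t ∈ Set.Icc (0 : ℝ) 1, g t ≤ M) {R : U → ℝ} (hR : ∀ u, 0 ≤ R u)
    {Ph : U → ℝ} (hPh : IsPMF Ph) : ∑ u, R u * g (Ph u) ≤ maxGain g R := by
  refine le_csSup ⟨(∑ u, R u) * M, ?_⟩ ⟨Ph, hPh, rfl⟩
  rintro v ⟨Ph', hPh', rfl⟩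
  rw [sum_mul]
  exact sum_le_sum fun u _ => mul_le_mul_of_nonneg_left (hgM _ (hPh'.mem_Icc u)) (hR u)

lemma maxGain_nonneg (hgnn : ∀ t ∈ Set.Icc (0 : ℝ) 1, 0 ≤ g t) {R : U → ℝ}
    (hR : ∀ u, 0 ≤ R u) : 0 ≤ maxGain g R := by
  refine Real.sSup_nonneg ?_
  rintro v ⟨Ph, hPh, rfl⟩
  exact sum_nonneg fun u _ => mul_nonneg (hR u) (hgnn _ (hPh.mem_Icc u))

lemma maxGain_le_mul_of_le_mul (hgnn : ∀ t ∈ Set.Icc (0 : ℝ) 1, 0 ≤ g t)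
    (hgM : ∀ t ∈ Set.Icc (0 : ℝ) 1, g t ≤ M) {R R' : U → ℝ} (hR' : ∀ u, 0 ≤ R' u) {c : ℝ}
    (hc : 0 ≤ c) (hRR' : ∀ u, R u ≤ c * R' u) : maxGain g R ≤ c * maxGain g R' := by
  refine Real.sSup_le ?_ (mul_nonneg hc (maxGain_nonneg hgnn hR'))
  rintro v ⟨Ph, hPh, rfl⟩
  calc ∑ u, R u * g (Ph u) ≤ ∑ u, c * (R' u * g (Ph u)) :=
        sum_le_sum fun u _ => by
          rw [← mul_assoc]
          exact mul_le_mul_of_nonneg_right (hRR' u) (hgnn _ (hPh.mem_Icc u))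
    _ = c * ∑ u, R' u * g (Ph u) := (mul_sum ..).symm
    _ ≤ c * maxGain g R' := mul_le_mul_of_nonneg_left (le_maxGain hgM hR' hPh) hc

end Gain

section Push

variable {X U : Type*} [Fintype X] {K : X → U → ℝ}

lemma push_nonneg {W : X → ℝ} (hW : ∀ x, 0 ≤ W x) (hK : ∀ x u, 0 ≤ K x u) (u : U) :
    0 ≤ push W K u :=
  sum_nonneg fun x _ => mul_nonneg (hW x) (hK x u)

lemma push_le_mul_push {W W' : X → ℝ} {c : ℝ} (hK : ∀ x u, 0 ≤ K x u)
    (hWW' : ∀ x, W x ≤ c * W' x) (u : U) : push W K u ≤ c * push W' K u := by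
  rw [push, push, mul_sum]
  exact sum_le_sum fun x _ => by
    rw [← mul_assoc]
    exact mul_le_mul_of_nonneg_right (hWW' x) (hK x u)

end Push

/-- The ratios `G_g(P_{U|Y=y}) / G_g(P_U)` over all channels `P_{U|X}`, for `Q = P_{X|Y=y}` and
`Pd = P_X`. -/
def gainRatios {X : Type} [Fintype X] (g : ℝ → ℝ) (Q Pd : X → ℝ) : Set ℝ :=
  {r : ℝ | ∃ (U : Type) (iU : Fintype U) (K : X → U → ℝ),
    @IsChannel X U iU K ∧ r = @maxGain U iU g (push Q K) / @maxGain U iU g (push Pd K)}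

lemma mem_upperBounds_gainRatios {X : Type} [Fintype X] {g : ℝ → ℝ} {M : ℝ}
    (hgnn : ∀ t ∈ Set.Icc (0 : ℝ) 1, 0 ≤ g t) (hgM : ∀ t ∈ Set.Icc (0 : ℝ) 1, g t ≤ M)
    {Q Pd : X → ℝ} (hPd : ∀ x, 0 ≤ Pd x) {c : ℝ} (hc : 0 ≤ c) (hQc : ∀ x, Q x ≤ c * Pd x) :
    c ∈ upperBounds (gainRatios g Q Pd) := by
  rintro r ⟨U, iU, K, hK, rfl⟩
  have hK0 : ∀ x u, 0 ≤ K x u := fun x => (hK x).1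
  have hnum : maxGain g (push Q K) ≤ c * maxGain g (push Pd K) :=
    maxGain_le_mul_of_le_mul hgnn hgM (push_nonneg hPd hK0) hc (push_le_mul_push hK0 hQc)
  rcases (maxGain_nonneg hgnn (push_nonneg hPd hK0)).eq_or_lt with hden | hden
  · rw [← hden, div_zero]
    exact hc
  · exact (div_le_iff₀ hden).2 hnum

lemma exists_le_add_mul_of_continuousWithinAt {g : ℝ → ℝ} {M η : ℝ}
    (hgc : ContinuousWithinAt g (Set.Icc 0 1) 0) (hg0 : g 0 = 0)
    (hgM : ∀ t ∈ Set.Icc (0 : ℝ) 1, g t ≤ M) (hM : 0 ≤ M) (hη : 0 < η) :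
    ∃ L, 0 ≤ L ∧ ∀ t ∈ Set.Icc (0 : ℝ) 1, g t ≤ η + L * t := by
  obtain ⟨δ, hδ, hsmall⟩ := Metric.continuousWithinAt_iff.1 hgc η hη
  refine ⟨M / δ, by positivity, fun t ht => ?_⟩
  rcases lt_or_ge t δ with htδ | htδ
  · have hgt := hsmall ht (by rwa [Real.dist_eq, sub_zero, abs_of_nonneg ht.1])
    rw [hg0, Real.dist_eq, sub_zero] at hgt
    linarith [le_abs_self (g t), mul_nonneg (div_nonneg hM hδ.le) ht.1]
  · calc g t ≤ M / δ * δ := by rw [div_mul_cancel₀ M hδ.ne']; exact hgM t ht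
      _ ≤ η + M / δ * t := by nlinarith [div_nonneg hM hδ.le]

section IsolatingChannel

variable {X : Type*} [DecidableEq X] (x₀ : X) {n : ℕ}

noncomputable def isolatingChannel (n : ℕ) (x : X) : Option (Fin n) → ℝ
  | none => if x = x₀ then 1 else 0
  | some _ => if x = x₀ then 0 else (n : ℝ)⁻¹

lemma isChannel_isolatingChannel (hn : 0 < n) : IsChannel (isolatingChannel x₀ n) := by
  intro x
  refine ⟨fun u => by cases u <;> simp only [isolatingChannel] <;> split_ifs <;> positivity, ?_⟩
  rw [Fintype.sum_option]
  by_cases hx : x = x₀ <;> simp [isolatingChannel, hx, hn.ne']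

variable [Fintype X]

lemma push_isolatingChannel_none (W : X → ℝ) : push W (isolatingChannel x₀ n) none = W x₀ := by
  simp [push, isolatingChannel]

lemma push_isolatingChannel_some {W : X → ℝ} (hW : IsPMF W) (i : Fin n) :
    push W (isolatingChannel x₀ n) (some i) = (1 - W x₀) / n := by
  have hsplit : ∀ x, W x * isolatingChannel x₀ n x (some i)
      = W x / n - if x = x₀ then W x / n else 0 := by
    intro x
    by_cases hx : x = x₀ <;> simp [isolatingChannel, hx, div_eq_mul_inv]
  rw [push, sum_congr rfl fun x _ => hsplit x, sum_sub_distrib, ← sum_div, hW.2,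
    sum_ite_eq' univ x₀, if_pos (mem_univ _), sub_div]

lemma isPMF_optionElim {t : ℝ} (ht : t ∈ Set.Icc (0 : ℝ) 1) (hn : 0 < n) :
    IsPMF fun u : Option (Fin n) => u.elim t fun _ => (1 - t) / n := by
  refine ⟨fun u => ?_, ?_⟩
  · cases u
    · exact ht.1
    · exact div_nonneg (sub_nonneg.2 ht.2) n.cast_nonneg
  · simp [Fintype.sum_option, mul_div_cancel₀ _ (Nat.cast_ne_zero.2 hn.ne' : (n : ℝ) ≠ 0)]

variable {g : ℝ → ℝ} {M : ℝ}

lemma le_maxGain_push_isolatingChannel (hgnn : ∀ t ∈ Set.Icc (0 : ℝ) 1, 0 ≤ g t)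
    (hgM : ∀ t ∈ Set.Icc (0 : ℝ) 1, g t ≤ M) (hn : 0 < n) {W : X → ℝ} (hW : ∀ x, 0 ≤ W x)
    {t : ℝ} (ht : t ∈ Set.Icc (0 : ℝ) 1) :
    W x₀ * g t ≤ maxGain g (push W (isolatingChannel x₀ n)) := by
  have hPh := isPMF_optionElim ht hn
  have hpush := push_nonneg hW fun x => ((isChannel_isolatingChannel x₀ hn) x).1
  refine le_trans ?_ (le_maxGain hgM hpush hPh)
  rw [Fintype.sum_option, push_isolatingChannel_none]
  exact le_add_of_nonneg_right
    (sum_nonneg fun i _ => mul_nonneg (hpush _) (hgnn _ (hPh.mem_Icc _)))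

lemma maxGain_push_isolatingChannel_le (hgM : ∀ t ∈ Set.Icc (0 : ℝ) 1, g t ≤ M)
    {η L : ℝ} (hη : 0 ≤ η) (hL : 0 ≤ L) (hlin : ∀ t ∈ Set.Icc (0 : ℝ) 1, g t ≤ η + L * t)
    (hn : 0 < n) {W : X → ℝ} (hW : IsPMF W) :
    maxGain g (push W (isolatingChannel x₀ n)) ≤ W x₀ * M + η + L / n := by
  refine csSup_le ⟨_, _, isPMF_optionElim ⟨le_rfl, zero_le_one⟩ hn, rfl⟩ ?_
  rintro v ⟨Ph, hPh, rfl⟩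
  have hn' : (0 : ℝ) < n := Nat.cast_pos.2 hn
  have hrest : ∑ i : Fin n, Ph (some i) ≤ 1 := by
    have := hPh.2
    rw [Fintype.sum_option] at this
    linarith [hPh.1 none]
  have hsmall : ∑ i : Fin n, g (Ph (some i)) ≤ n * η + L :=
    calc ∑ i : Fin n, g (Ph (some i)) ≤ ∑ i : Fin n, (η + L * Ph (some i)) :=
          sum_le_sum fun i _ => hlin _ (hPh.mem_Icc _)
      _ = n * η + L * ∑ i : Fin n, Ph (some i) := by simp [sum_add_distrib, mul_sum]
      _ ≤ n * η + L := by linarith [mul_le_mul_of_nonneg_left hrest hL]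
  have hWx₀ := hW.mem_Icc x₀
  calc ∑ u, push W (isolatingChannel x₀ n) u * g (Ph u)
      = W x₀ * g (Ph none) + (1 - W x₀) / n * ∑ i : Fin n, g (Ph (some i)) := by
        simp [Fintype.sum_option, push_isolatingChannel_none, push_isolatingChannel_some x₀ hW,
          mul_sum]
    _ ≤ W x₀ * M + (1 - W x₀) / n * (n * η + L) := by
        gcongr
        · exact hWx₀.1
        · exact hgM _ (hPh.mem_Icc _)
        · exact div_nonneg (sub_nonneg.2 hWx₀.2) hn'.le
    _ ≤ W x₀ * M + 1 / n * (n * η + L) := by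
        gcongr
        linarith [hWx₀.1]
    _ = W x₀ * M + η + L / n := by field_simp; ring

end IsolatingChannel

section Ratios

variable {X : Type} [Fintype X] {g : ℝ → ℝ} {M : ℝ} {Q Pd : X → ℝ}

lemma exists_gainRatio_ge (hgnn : ∀ t ∈ Set.Icc (0 : ℝ) 1, 0 ≤ g t) (hg0 : g 0 = 0)
    (hgc : ContinuousWithinAt g (Set.Icc 0 1) 0) (hM : IsLUB (g '' Set.Icc 0 1) M)
    (hQ : ∀ x, 0 ≤ Q x) (hPd : IsPMF Pd) {x₀ : X} (hx₀ : 0 < Pd x₀) {ε : ℝ}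
    (hε : ε ∈ Set.Ioo 0 M) :
    ∃ r ∈ gainRatios g Q Pd, Q x₀ * (M - ε) / (Pd x₀ * M + ε) ≤ r := by
  classical
  have hgM : ∀ t ∈ Set.Icc (0 : ℝ) 1, g t ≤ M := fun t ht => hM.1 ⟨t, ht, rfl⟩
  obtain ⟨_, ⟨t, ht, rfl⟩, hgt, -⟩ := hM.exists_between (sub_lt_self M hε.1)
  obtain ⟨L, hL, hlin⟩ :=
    exists_le_add_mul_of_continuousWithinAt hgc hg0 hgM (hε.1.trans hε.2).le (half_pos hε.1)
  obtain ⟨n, hn⟩ := exists_nat_gt (2 * L / ε)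
  have hn' : (0 : ℝ) < n := (div_nonneg (by linarith) hε.1.le).trans_lt hn
  have hLn : L / n ≤ ε / 2 := by
    rw [div_lt_iff₀ hε.1] at hn
    rw [div_le_iff₀ hn']
    linarith
  have hn0 : 0 < n := Nat.cast_pos.1 hn'
  set K := isolatingChannel x₀ n
  have hnum : Q x₀ * (M - ε) ≤ maxGain g (push Q K) :=
    (mul_le_mul_of_nonneg_left hgt.le (hQ x₀)).trans
      (le_maxGain_push_isolatingChannel x₀ hgnn hgM hn0 hQ ht)
  have hden_pos : 0 < maxGain g (push Pd K) :=
    (mul_pos hx₀ (sub_pos.2 hε.2)).trans_le ((mul_le_mul_of_nonneg_left hgt.le hx₀.le).trans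
      (le_maxGain_push_isolatingChannel x₀ hgnn hgM hn0 hPd.1 ht))
  have hden_le : maxGain g (push Pd K) ≤ Pd x₀ * M + ε :=
    (maxGain_push_isolatingChannel_le x₀ hgM (half_pos hε.1).le hL hlin hn0 hPd).trans
      (by linarith)
  refine ⟨_, ⟨_, _, K, isChannel_isolatingChannel x₀ hn0, rfl⟩, ?_⟩
  have hnum_nonneg : 0 ≤ maxGain g (push Q K) :=
    maxGain_nonneg hgnn (push_nonneg hQ fun x => (isChannel_isolatingChannel x₀ hn0 x).1)
  exact div_le_div₀ hnum_nonneg hnum hden_pos hden_le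

lemma sSup_gainRatios [Nonempty X] (hgnn : ∀ t ∈ Set.Icc (0 : ℝ) 1, 0 ≤ g t) (hg0 : g 0 = 0)
    (hgc : ContinuousWithinAt g (Set.Icc 0 1) 0) (hM : IsLUB (g '' Set.Icc 0 1) M)
    (hM0 : 0 < M) (hQ : ∀ x, 0 ≤ Q x) (hPd : IsPMF Pd) (hPd0 : ∀ x, 0 < Pd x) :
    sSup (gainRatios g Q Pd) = univ.sup' univ_nonempty fun x => Q x / Pd x := by
  obtain ⟨x₀, -, hx₀⟩ := exists_mem_eq_sup' univ_nonempty fun x => Q x / Pd x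
  set c := univ.sup' univ_nonempty fun x => Q x / Pd x
  have hQc : ∀ x, Q x ≤ c * Pd x := fun x =>
    (div_le_iff₀ (hPd0 x)).1 (le_sup' (fun x => Q x / Pd x) (mem_univ x))
  have hc : 0 ≤ c := hx₀ ▸ div_nonneg (hQ x₀) (hPd0 x₀).le
  have hle := mem_upperBounds_gainRatios hgnn (fun t ht => hM.1 ⟨t, ht, rfl⟩)
    (fun x => (hPd0 x).le) hc hQc
  refine le_antisymm (Real.sSup_le hle hc) ?_
  have hlim : Filter.Tendsto (fun ε => Q x₀ * (M - ε) / (Pd x₀ * M + ε))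
      (nhdsWithin 0 (Set.Ioi 0)) (nhds c) := by
    have hcont : ContinuousAt (fun ε => Q x₀ * (M - ε) / (Pd x₀ * M + ε)) 0 :=
      (by fun_prop : ContinuousAt (fun ε : ℝ => Q x₀ * (M - ε)) 0).div (by fun_prop)
        (by have := hPd0 x₀; positivity)
    refine tendsto_nhdsWithin_of_tendsto_nhds ?_
    convert hcont.tendsto using 2
    rw [hx₀, sub_zero, add_zero, mul_div_mul_right _ _ hM0.ne']
  refine le_of_tendsto hlim ?_
  filter_upwards [Ioo_mem_nhdsGT hM0] with ε hε
  obtain ⟨r, hr, hle'⟩ := exists_gainRatio_ge hgnn hg0 hgc hM hQ hPd (hPd0 x₀) hε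
  exact hle'.trans (le_csSup ⟨c, hle⟩ hr)

end Ratios

/-- Under mild regularity assumptions on the gain function `g`, the
opportunistic maximal `g`-leakage equals the Sibson mutual information of order `∞`:
`log ∑_{y : P_Y(y)>0} P_Y(y) · sup_{U,P_{U|X}} G_g(P_{U|Y=y})/G_g(P_U)
  = log ∑_{y : P_Y(y)>0} max_x P_{Y|X}(y|x)`. -/
theorem stmt7 {X Y : Type} [Fintype X] [Fintype Y] [Nonempty X]
    (P : X → Y → ℝ) (hP : IsPMF (fun z : X × Y => P z.1 z.2))
    (hPX : ∀ x, 0 < ∑ y, P x y)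
    (g : ℝ → ℝ)
    (hgnn : ∀ t ∈ Set.Icc (0:ℝ) 1, 0 ≤ g t)
    (hg0 : g 0 = 0)
    (hgc : ContinuousWithinAt g (Set.Icc (0:ℝ) 1) 0)
    (hgb : BddAbove (g '' Set.Icc (0:ℝ) 1))
    (hgpos : 0 < sSup (g '' Set.Icc (0:ℝ) 1)) :
    Real.log (∑ y ∈ Finset.univ.filter (fun y => 0 < ∑ x, P x y),
        (∑ x, P x y) *
          sSup {r : ℝ | ∃ (U : Type) (iU : Fintype U) (K : X → U → ℝ),
            @IsChannel X U iU K ∧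
            r = @maxGain U iU g (push (fun x => P x y / ∑ x', P x' y) K) /
                @maxGain U iU g (push (fun x => ∑ y', P x y') K)})
      = Real.log (∑ y ∈ Finset.univ.filter (fun y => 0 < ∑ x, P x y),
          Finset.univ.sup' Finset.univ_nonempty (fun x => P x y / ∑ y', P x y')) := by
  have hM : IsLUB (g '' Set.Icc 0 1) (sSup (g '' Set.Icc 0 1)) :=
    isLUB_csSup ⟨g 0, 0, ⟨le_rfl, zero_le_one⟩, rfl⟩ hgb
  have hPX_pmf : IsPMF fun x => ∑ y, P x y :=
    ⟨fun x => (hPX x).le, by simpa only [Fintype.sum_prod_type] using hP.2⟩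
  refine congrArg Real.log (sum_congr rfl fun y hy => ?_)
  have hPY : 0 < ∑ x, P x y := (mem_filter.1 hy).2
  have hQ : ∀ x, 0 ≤ P x y / ∑ x', P x' y := fun x => div_nonneg (hP.1 (x, y)) hPY.le
  calc (∑ x, P x y) * sSup (gainRatios g (fun x => P x y / ∑ x', P x' y) fun x => ∑ y', P x y')
      = (∑ x, P x y) * univ.sup' univ_nonempty fun x => P x y / (∑ x', P x' y) / ∑ y', P x y' := by
        rw [sSup_gainRatios hgnn hg0 hgc hM hgpos hQ hPX_pmf hPX]
    _ = univ.sup' univ_nonempty fun x => P x y / ∑ y', P x y' := by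
        rw [mul₀_sup' hPY.le]
        congr 1
        ext x
        field_simp
end

section
/- Let P and Q be pmfs on a finite alphabet 𝒳 with Q(x)>0 for all x. Then the variational characterization of D_∞ also holds for the logarithmic gain function g(t)=log t: sup over finite alphabets 𝒰 and channels P_{U|X} with H(Q_U)>0 of log[ H(P_U) / H(Q_U) ] = D_∞(P‖Q), where H denotes Shannon entropy, P_U(u)=Σ_x P(x)P_{U|X}(u|x), and Q_U(u)=Σ_x Q(x)P_{U|X}(u|x). (Equivalently, the sup of the ratio H(P_U)/H(Q_U) over such channels equals max_x P(x)/Q(x).) -/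
open Finset

/-- Shannon entropy `H(R) = −∑_u R(u) log R(u)` (terms with `R(u) = 0` vanish). -/
noncomputable def entropy {U : Type*} [Fintype U] (R : U → ℝ) : ℝ :=
  -∑ u, R u * Real.log (R u)

/-- The Rényi divergence of order `∞`: `max_{x : P(x) > 0} log (P(x)/Q(x))`. -/
noncomputable def Dinf {X : Type*} [Fintype X] (P Q : X → ℝ) : ℝ :=
  sSup {v : ℝ | ∃ x, 0 < P x ∧ v = Real.log (P x / Q x)}

/-! With `D = D_∞(P‖Q)` we have `P ≤ e^D Q` pointwise, hence `P_U ≤ e^D Q_U` for every channel, and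
Gibbs' inequality gives `H(P_U) ≤ -∑ P_U log Q_U ≤ e^D H(Q_U)`, the last step because
`-log Q_U ≥ 0`. Conversely, let `x₀` attain the maximum defining `D`. The channel that spreads `x₀`
uniformly over `N` fresh symbols and sends every other letter to one further symbol yields
`H(P_U) = h(P(x₀)) + P(x₀) log N` and likewise for `Q`, so the entropy ratio tends to
`P(x₀)/Q(x₀) = e^D` as `N → ∞`. -/

open Filter Topology Real

lemma entropy_eq_sum_negMulLog {U : Type*} [Fintype U] (R : U → ℝ) :
    entropy R = ∑ u, negMulLog (R u) := by
  simp only [entropy, negMulLog, neg_mul, sum_neg_distrib]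

lemma mul_log_sub_mul_log_le_sub {p q : ℝ} (hp : 0 ≤ p) (hq : 0 ≤ q) (hpq : q = 0 → p = 0) :
    p * log q - p * log p ≤ q - p := by
  rcases hp.eq_or_lt with rfl | hp
  · simpa using hq
  have hq : 0 < q := hq.lt_of_ne fun h => hp.ne' (hpq h.symm)
  calc p * log q - p * log p = p * log (q / p) := by rw [log_div hq.ne' hp.ne']; ring
    _ ≤ p * (q / p - 1) := mul_le_mul_of_nonneg_left (log_le_sub_one_of_pos (by positivity)) hp.le
    _ = q - p := by field_simp

namespace IsPMF

variable {α : Type*} [Fintype α] {p q : α → ℝ}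

lemma le_one_s10 (hp : IsPMF p) (a : α) : p a ≤ 1 :=
  hp.2 ▸ single_le_sum (fun b _ => hp.1 b) (mem_univ a)

lemma exists_pos (hp : IsPMF p) : ∃ a, 0 < p a := by
  by_contra! h
  have : ∑ a, p a = 0 := sum_eq_zero fun a _ => le_antisymm (h a) (hp.1 a)
  simp [hp.2] at this

lemma entropy_nonneg (hp : IsPMF p) : 0 ≤ entropy p := by
  rw [entropy_eq_sum_negMulLog]
  exact sum_nonneg fun a _ => negMulLog_nonneg (hp.1 a) (hp.le_one_s10 a)

lemma entropy_le_neg_sum_mul_log (hp : IsPMF p) (hq : IsPMF q) (hpq : ∀ a, q a = 0 → p a = 0) :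
    entropy p ≤ -∑ a, p a * log (q a) := by
  have := sum_le_sum fun a (_ : a ∈ univ) => mul_log_sub_mul_log_le_sub (hp.1 a) (hq.1 a) (hpq a)
  rw [sum_sub_distrib, sum_sub_distrib, hp.2, hq.2, sub_self] at this
  rw [entropy]
  linarith

lemma entropy_le_mul_entropy (hp : IsPMF p) (hq : IsPMF q) {M : ℝ}
    (hle : ∀ a, p a ≤ M * q a) : entropy p ≤ M * entropy q := by
  have hpq (a) (h : q a = 0) : p a = 0 := le_antisymm (by simpa [h] using hle a) (hp.1 a)
  calc entropy p ≤ ∑ a, p a * -log (q a) := by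
        simpa only [mul_neg, sum_neg_distrib] using hp.entropy_le_neg_sum_mul_log hq hpq
    _ ≤ ∑ a, M * q a * -log (q a) := sum_le_sum fun a _ =>
        mul_le_mul_of_nonneg_right (hle a) (neg_nonneg.2 (log_nonpos (hq.1 a) (hq.le_one_s10 a)))
    _ = M * entropy q := by simp only [entropy, mul_sum, mul_neg, sum_neg_distrib, mul_assoc]

end IsPMF

section Push

variable {X U : Type*} [Fintype X] [Fintype U] {P Q : X → ℝ} {K : X → U → ℝ}

lemma isPMF_push (hP : IsPMF P) (hK : IsChannel K) : IsPMF (push P K) := by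
  refine ⟨fun u => sum_nonneg fun x _ => mul_nonneg (hP.1 x) ((hK x).1 u), ?_⟩
  simp only [push]
  rw [sum_comm]
  simp only [← mul_sum, (hK _).2, mul_one, hP.2]

lemma push_le_mul_push_s10 (hK : IsChannel K) {M : ℝ} (hle : ∀ x, P x ≤ M * Q x) (u : U) :
    push P K u ≤ M * push Q K u := by
  simp only [push, mul_sum, ← mul_assoc]
  exact sum_le_sum fun x _ => mul_le_mul_of_nonneg_right (hle x) ((hK x).1 u)

end Push

section Dinf

variable {X : Type*} [Fintype X] {P Q : X → ℝ}

lemma finite_setOf_log_div : {v : ℝ | ∃ x, 0 < P x ∧ v = log (P x / Q x)}.Finite :=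
  (Set.finite_range fun x => log (P x / Q x)).subset fun _ ⟨x, _, hv⟩ => ⟨x, hv.symm⟩

lemma log_div_le_Dinf {x : X} (hx : 0 < P x) : log (P x / Q x) ≤ Dinf P Q :=
  le_csSup finite_setOf_log_div.bddAbove ⟨x, hx, rfl⟩

lemma IsPMF.exists_Dinf_eq (hP : IsPMF P) : ∃ x, 0 < P x ∧ Dinf P Q = log (P x / Q x) := by
  obtain ⟨x, hx⟩ := hP.exists_pos
  have hne : {v : ℝ | ∃ x, 0 < P x ∧ v = log (P x / Q x)}.Nonempty := ⟨_, x, hx, rfl⟩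
  exact hne.csSup_mem finite_setOf_log_div

lemma le_exp_Dinf_mul (hQ : ∀ x, 0 < Q x) (x : X) : P x ≤ exp (Dinf P Q) * Q x := by
  rcases le_or_gt (P x) 0 with hx | hx
  · exact hx.trans (by positivity [hQ x])
  · rw [← div_le_iff₀ (hQ x), ← log_le_iff_le_exp (div_pos hx (hQ x))]
    exact log_div_le_Dinf hx

lemma IsPMF.Dinf_nonneg (hP : IsPMF P) (hQ : IsPMF Q) (hQpos : ∀ x, 0 < Q x) :
    0 ≤ Dinf P Q := by
  rw [← one_le_exp_iff, ← hP.2]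
  calc ∑ x, P x ≤ ∑ x, exp (Dinf P Q) * Q x := sum_le_sum fun x _ => le_exp_Dinf_mul hQpos x
    _ = exp (Dinf P Q) := by rw [← mul_sum, hQ.2, mul_one]

lemma log_entropy_push_div_le_Dinf {U : Type*} [Fintype U] {K : X → U → ℝ}
    (hP : IsPMF P) (hQ : IsPMF Q) (hQpos : ∀ x, 0 < Q x) (hK : IsChannel K) :
    log (entropy (push P K) / entropy (push Q K)) ≤ Dinf P Q := by
  have hratio : entropy (push P K) / entropy (push Q K) ≤ exp (Dinf P Q) :=
    div_le_of_le_mul₀ (isPMF_push hQ hK).entropy_nonneg (exp_pos _).le <|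
      (isPMF_push hP hK).entropy_le_mul_entropy (isPMF_push hQ hK)
        (push_le_mul_push_s10 hK (le_exp_Dinf_mul hQpos))
  rcases (div_nonneg (isPMF_push hP hK).entropy_nonneg
    (isPMF_push hQ hK).entropy_nonneg).eq_or_lt with h | h
  · -- `log 0 = 0`, so a vanishing ratio is covered only because `0 ≤ D_∞(P‖Q)`.
    rw [← h, log_zero]
    exact hP.Dinf_nonneg hQ hQpos
  · exact (log_le_iff_le_exp h).2 hratio

end Dinf

section SplitChannel

variable {X : Type*} [DecidableEq X]

noncomputable def splitChannel (x₀ : X) (n : ℕ) : X → Option (Fin n) → ℝ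
  | x, none => if x = x₀ then 0 else 1
  | x, some _ => if x = x₀ then (n : ℝ)⁻¹ else 0

lemma isChannel_splitChannel (x₀ : X) {n : ℕ} (hn : n ≠ 0) :
    IsChannel (splitChannel x₀ n) := by
  intro x
  refine ⟨fun u => by cases u <;> simp only [splitChannel] <;> split_ifs <;> positivity, ?_⟩
  rw [Fintype.sum_option]
  by_cases hx : x = x₀ <;> simp [splitChannel, hx, hn]

lemma push_splitChannel_none [Fintype X] {P : X → ℝ} (hP : IsPMF P) (x₀ : X) (n : ℕ) :
    push P (splitChannel x₀ n) none = 1 - P x₀ := by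
  simp only [push, splitChannel, mul_ite, mul_zero, mul_one]
  simp [sum_ite, filter_ne', ← hP.2, sum_erase_eq_sub]

lemma push_splitChannel_some [Fintype X] (P : X → ℝ) (x₀ : X) (n : ℕ) (i : Fin n) :
    push P (splitChannel x₀ n) (some i) = P x₀ / n := by
  simp [push, splitChannel, div_eq_mul_inv]

lemma entropy_push_splitChannel [Fintype X] {P : X → ℝ} (hP : IsPMF P) (x₀ : X) {n : ℕ}
    (hn : n ≠ 0) :
    entropy (push P (splitChannel x₀ n)) = binEntropy (P x₀) + P x₀ * log n := by
  rw [entropy_eq_sum_negMulLog, Fintype.sum_option, push_splitChannel_none hP]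
  simp only [push_splitChannel_some, sum_const, card_univ, Fintype.card_fin, nsmul_eq_mul,
    binEntropy_eq_negMulLog_add_negMulLog_one_sub, div_eq_mul_inv, negMulLog_mul]
  simp only [negMulLog, log_inv]
  field_simp
  ring

lemma entropy_push_splitChannel_pos [Fintype X] {Q : X → ℝ} (hQ : IsPMF Q) {x₀ : X}
    (hx₀ : 0 < Q x₀) {n : ℕ} (hn : 2 ≤ n) : 0 < entropy (push Q (splitChannel x₀ n)) := by
  rw [entropy_push_splitChannel hQ x₀ (by omega)]
  exact add_pos_of_nonneg_of_pos (binEntropy_nonneg (hQ.1 x₀) (hQ.le_one_s10 x₀))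
    (mul_pos hx₀ (log_pos (by exact_mod_cast hn)))

-- With `2 ^ n` symbols both entropies are affine in `n`.
lemma tendsto_entropy_push_splitChannel_div [Fintype X] {P Q : X → ℝ} (hP : IsPMF P)
    (hQ : IsPMF Q) (x₀ : X) (hx₀ : Q x₀ ≠ 0) :
    Tendsto (fun n : ℕ => entropy (push P (splitChannel x₀ (2 ^ n))) /
      entropy (push Q (splitChannel x₀ (2 ^ n)))) atTop (𝓝 (P x₀ / Q x₀)) := by
  have hlog2 : log 2 ≠ 0 := (log_pos one_lt_two).ne'
  have h := tendsto_add_mul_div_add_mul_atTop_nhds (binEntropy (P x₀)) (binEntropy (Q x₀))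
    (P x₀ * log 2) (mul_ne_zero hx₀ hlog2)
  rw [mul_div_mul_right _ _ hlog2] at h
  refine h.congr fun n => ?_
  rw [entropy_push_splitChannel hP x₀ (by positivity), entropy_push_splitChannel hQ x₀
    (by positivity)]
  push_cast
  rw [log_pow]
  ring

end SplitChannel

/-- The variational characterization of `D_∞` also holds for the logarithmic
gain function `g(t) = log t`:
`sup_{U, P_{U|X} : H(Q_U) > 0} log (H(P_U)/H(Q_U)) = D_∞(P‖Q)`. -/
theorem stmt10 {X : Type} [Fintype X]
    (P Q : X → ℝ) (hP : IsPMF P) (hQ : IsPMF Q) (hQpos : ∀ x, 0 < Q x) :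
    IsLUB
      {r : ℝ | ∃ (U : Type) (iU : Fintype U) (K : X → U → ℝ),
        @IsChannel X U iU K ∧ 0 < @entropy U iU (push Q K) ∧
        r = Real.log (@entropy U iU (push P K) / @entropy U iU (push Q K))}
      (Dinf P Q) := by
  refine ⟨?_, fun b hb => ?_⟩
  · rintro r ⟨U, iU, K, hK, -, rfl⟩
    exact log_entropy_push_div_le_Dinf hP hQ hQpos hK
  · classical
    obtain ⟨x₀, hx₀, hD⟩ := hP.exists_Dinf_eq (Q := Q)
    rw [hD]
    refine le_of_tendsto ((tendsto_entropy_push_splitChannel_div hP hQ x₀ (hQpos x₀).ne').log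
      (div_pos hx₀ (hQpos x₀)).ne') ?_
    filter_upwards [eventually_ne_atTop 0] with n hn
    exact hb ⟨_, _, _, isChannel_splitChannel x₀ (by positivity),
      entropy_push_splitChannel_pos hQ (hQpos x₀) (Nat.one_lt_two_pow hn), rfl⟩
end
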